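/- Let a > 0 and let g : [0,∞) → ℝ be continuous and bounded. Define f(γ,t) = ∫_0^t g(t−s)·K_a(γ,s) ds for γ > 0 and t > 0, where K_a(γ,s) = (√a·γ/(2√π·s^{3/2}))·e^{−aγ²/(4s)}. Then f satisfies the heat equation ∂f/∂t(γ,t) = (1/a)·∂²f/∂γ²(γ,t) at every point (γ,t) ∈ (0,∞)×(0,∞). -/

import Mathlib

open Real MeasureTheory intervalIntegral

/-- The boundary heat kernel K_a(γ,s) for the half-line heat equation f_t = f_{γγ}/a. -/
noncomputable def boundaryHeatKernel (a γ s : ℝ) : ℝ :=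
  Real.sqrt a * γ / (2 * Real.sqrt Real.pi * s ^ ((3 : ℝ) / 2)) * Real.exp (-(a * γ ^ 2 / (4 * s)))

open Set Filter Topology Metric

/-!
For `s > 0` the kernel is `K(γ, s) = c γ s^(-3/2) e^(-aγ²/(4s))`, and a direct computation gives
`∂²_γ K = a ∂ₛ K`; the proof consists in moving derivatives under the integral sign.
Extended by zero to `s ≤ 0`, each `s^(-m) e^(-q/s)` with `m, q > 0` is differentiable on all of `ℝ`
and bounded by `(m/q)^m`, so for `γ` bounded away from `0` the derivatives of the kernel are
uniformly bounded and dominated convergence gives the `γ`-derivatives. The time variable sits in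
the forcing `g (t - s)`, which is only continuous; the substitution `u = t - s` moves it into the
kernel, `f(γ, t) = ∫₀^T g(u) K(γ, t - u) du` for `t ≤ T`, where it is differentiated the same way.
-/

theorem hasDerivAt_intervalIntegral_mul {φ : ℝ → ℝ} {F F' : ℝ → ℝ → ℝ} {x₀ ε a b C : ℝ}
    (hε : 0 < ε) (hφ : ContinuousOn φ (uIcc a b))
    (hF : ∀ x ∈ ball x₀ ε, Continuous (F x)) (hF' : Continuous (F' x₀))
    (hF'C : ∀ x ∈ ball x₀ ε, ∀ u, |F' x u| ≤ C)
    (hFF' : ∀ x ∈ ball x₀ ε, ∀ u, HasDerivAt (F · u) (F' x u) x) :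
    HasDerivAt (fun x => ∫ u in a..b, φ u * F x u) (∫ u in a..b, φ u * F' x₀ u) x₀ := by
  obtain ⟨Cφ, hCφ⟩ := isCompact_uIcc.exists_bound_of_continuousOn hφ
  have hCφ₀ : 0 ≤ Cφ := (norm_nonneg _).trans (hCφ a left_mem_uIcc)
  have hmeas {G : ℝ → ℝ} (hG : Continuous G) :
      AEStronglyMeasurable (fun u => φ u * G u) (volume.restrict (uIoc a b)) :=
    ((hφ.mul hG.continuousOn).mono uIoc_subset_uIcc).aestronglyMeasurable measurableSet_uIoc
  refine (hasDerivAt_integral_of_dominated_loc_of_deriv_le (F := fun x u => φ u * F x u)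
    (F' := fun x u => φ u * F' x u) (bound := fun _ => Cφ * C)
    (ball_mem_nhds x₀ hε) ?_ ?_ (hmeas hF') ?_ intervalIntegrable_const ?_).2
  · filter_upwards [ball_mem_nhds x₀ hε] with x hx using hmeas (hF x hx)
  · exact (hφ.mul (hF x₀ (mem_ball_self hε)).continuousOn).intervalIntegrable
  · refine ae_of_all _ fun u hu x hx => ?_
    rw [norm_mul]
    exact mul_le_mul (hCφ u (uIoc_subset_uIcc hu)) (hF'C x hx u) (norm_nonneg _) hCφ₀
  · exact ae_of_all _ fun u _ x hx => (hFF' x hx u).const_mul (φ u)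

section CausalConvolution

variable {g K K' : ℝ → ℝ}

theorem integral_sub_mul_eq_integral_mul_sub (hg : ContinuousOn g (Ici 0)) (hK : Continuous K)
    (hK₀ : ∀ s ≤ 0, K s = 0) {τ T : ℝ} (hτ : 0 ≤ τ) (hτT : τ ≤ T) :
    ∫ s in 0..τ, g (τ - s) * K s = ∫ u in 0..T, g u * K (τ - u) := by
  have hint : ∀ c d, 0 ≤ c → 0 ≤ d → IntervalIntegrable (fun u => g u * K (τ - u)) volume c d :=
    fun c d hc hd => ContinuousOn.intervalIntegrable <|
      (hg.mono fun u hu => le_trans (le_min hc hd) hu.1).mul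
        (hK.comp (continuous_sub_left τ)).continuousOn
  have hzero : ∫ u in τ..T, g u * K (τ - u) = 0 := by
    refine (integral_congr fun u hu => ?_).trans integral_zero
    rw [uIcc_of_le hτT] at hu
    simp [hK₀ _ (sub_nonpos.2 hu.1)]
  rw [← integral_add_adjacent_intervals (hint 0 τ le_rfl hτ) (hint τ T hτ (hτ.trans hτT)),
    hzero, add_zero]
  simpa using integral_comp_sub_left (a := 0) (b := τ) (fun u => g u * K (τ - u)) τ

theorem hasDerivAt_integral_sub_mul {C t : ℝ} (hg : ContinuousOn g (Ici 0))
    (hK : ∀ s, HasDerivAt K (K' s) s) (hK' : Continuous K') (hK'C : ∀ s, |K' s| ≤ C)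
    (hK₀ : ∀ s ≤ 0, K s = 0) (hK'₀ : ∀ s ≤ 0, K' s = 0) (ht : 0 < t) :
    HasDerivAt (fun τ => ∫ s in 0..τ, g (τ - s) * K s) (∫ s in 0..t, g (t - s) * K' s) t := by
  have hKc : Continuous K := continuous_iff_continuousAt.2 fun s => (hK s).continuousAt
  have hshift : (fun τ => ∫ u in 0..t + 1, g u * K (τ - u)) =ᶠ[𝓝 t]
      fun τ => ∫ s in 0..τ, g (τ - s) * K s := by
    filter_upwards [Ioo_mem_nhds ht (lt_add_one t)] with τ hτ
    exact (integral_sub_mul_eq_integral_mul_sub hg hKc hK₀ hτ.1.le hτ.2.le).symm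
  rw [integral_sub_mul_eq_integral_mul_sub hg hK' hK'₀ ht.le (lt_add_one t).le]
  have hg' : ContinuousOn g (uIcc 0 (t + 1)) := by
    rw [uIcc_of_le (by linarith)]
    exact hg.mono Icc_subset_Ici_self
  exact (hasDerivAt_intervalIntegral_mul one_pos hg'
    (fun τ _ => hKc.comp (continuous_sub_left τ)) (hK'.comp (continuous_sub_left t))
    (fun τ _ u => hK'C (τ - u)) (fun τ _ u => (hK (τ - u)).comp_sub_const τ u)
    ).congr_of_eventuallyEq hshift.symm

end CausalConvolution

noncomputable def rpowNegExp (m q s : ℝ) : ℝ :=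
  if 0 < s then s ^ (-m) * exp (-(q / s)) else 0

section rpowNegExp

variable {m q s : ℝ}

theorem rpowNegExp_of_pos (hs : 0 < s) : rpowNegExp m q s = s ^ (-m) * exp (-(q / s)) :=
  if_pos hs

theorem rpowNegExp_of_nonpos (hs : s ≤ 0) : rpowNegExp m q s = 0 :=
  if_neg hs.not_gt

theorem rpowNegExp_nonneg : 0 ≤ rpowNegExp m q s := by
  unfold rpowNegExp; split_ifs <;> positivity

theorem rpowNegExp_le {q₁ : ℝ} (hm : 0 < m) (hq₁ : 0 < q₁) (hq : q₁ ≤ q) (s : ℝ) :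
    rpowNegExp m q s ≤ (m / q₁) ^ m := by
  rcases le_or_gt s 0 with hs | hs
  · rw [rpowNegExp_of_nonpos hs]; positivity
  set x := q₁ / (m * s) with hxdef
  have hx : 0 < x := by positivity
  have hsx : s ^ (-m) = (m / q₁) ^ m * x ^ m := by
    rw [← mul_rpow (by positivity) hx.le, rpow_neg hs.le, ← inv_rpow hs.le]
    congr 1; rw [hxdef]; field_simp
  have hexp : exp (-(q / s)) ≤ (exp x ^ m)⁻¹ := by
    rw [← exp_mul, ← exp_neg]
    gcongr
    rw [hxdef]; field_simp; exact hq
  calc rpowNegExp m q s ≤ (m / q₁) ^ m * x ^ m * (exp x ^ m)⁻¹ := by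
        rw [rpowNegExp_of_pos hs, hsx]; gcongr
    _ = (m / q₁) ^ m * (x / exp x) ^ m := by
        rw [div_rpow hx.le (exp_pos x).le]; ring
    _ ≤ (m / q₁) ^ m := by
        refine mul_le_of_le_one_right (by positivity) (rpow_le_one (by positivity) ?_ hm.le)
        rw [div_le_one (exp_pos x)]; linarith [add_one_le_exp x]

theorem tendsto_rpowNegExp_nhdsGT_zero (m : ℝ) (hq : 0 < q) :
    Tendsto (rpowNegExp m q) (𝓝[>] 0) (𝓝 0) := by
  refine ((tendsto_rpow_mul_exp_neg_mul_atTop_nhds_zero m q hq).comp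
    tendsto_inv_nhdsGT_zero).congr' ?_
  filter_upwards [self_mem_nhdsWithin] with s (hs : 0 < s)
  rw [Function.comp, rpowNegExp_of_pos hs, rpow_neg hs.le, inv_rpow hs.le, div_eq_mul_inv,
    neg_mul]

theorem continuous_rpowNegExp (m : ℝ) (hq : 0 < q) : Continuous (rpowNegExp m q) := by
  refine continuous_iff_continuousAt.2 fun s => ?_
  rcases lt_trichotomy s 0 with hs | rfl | hs
  · exact continuousAt_const.congr <| (eventually_lt_nhds hs).mono fun x hx =>
      (rpowNegExp_of_nonpos hx.le).symm
  · refine continuousAt_iff_continuous_left_right.2 ⟨?_, ?_⟩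
    · exact continuousWithinAt_const.congr (fun x hx => rpowNegExp_of_nonpos hx)
        (rpowNegExp_of_nonpos le_rfl)
    · rw [← continuousWithinAt_Ioi_iff_Ici, ContinuousWithinAt, rpowNegExp_of_nonpos le_rfl]
      exact tendsto_rpowNegExp_nhdsGT_zero m hq
  · have : ContinuousAt (fun x => x ^ (-m) * exp (-(q / x))) s :=
      (continuousAt_rpow_const s (-m) (Or.inl hs.ne')).mul
        (continuousAt_const.div continuousAt_id hs.ne').neg.rexp
    exact this.congr <| (eventually_gt_nhds hs).mono fun x hx => (rpowNegExp_of_pos hx).symm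

theorem hasDerivAt_rpowNegExp (m : ℝ) (hq : 0 < q) (s : ℝ) :
    HasDerivAt (rpowNegExp m q)
      (-m * rpowNegExp (m + 1) q s + q * rpowNegExp (m + 2) q s) s := by
  have hne : ∀ s ≠ 0, HasDerivAt (rpowNegExp m q)
      (-m * rpowNegExp (m + 1) q s + q * rpowNegExp (m + 2) q s) s := by
    intro s hs
    rcases hs.lt_or_gt with hs | hs
    · rw [rpowNegExp_of_nonpos hs.le, rpowNegExp_of_nonpos hs.le, mul_zero, mul_zero, add_zero]
      exact (hasDerivAt_const s 0).congr_of_eventuallyEq <|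
        (eventually_lt_nhds hs).mono fun x hx => rpowNegExp_of_nonpos hx.le
    · have hd : HasDerivAt (fun x => x ^ (-m) * exp (-(q / x)))
          (-m * s ^ (-m - 1) * exp (-(q / s)) + s ^ (-m) * (exp (-(q / s)) * (q / s ^ 2)))
          s := by
        have h : HasDerivAt (fun x => -(q / x)) (q / s ^ 2) s := by
          have := (hasDerivAt_inv hs.ne').const_mul (-q)
          field_simp at this
          exact this
        exact (hasDerivAt_rpow_const (Or.inl hs.ne')).mul h.exp
      rw [rpowNegExp_of_pos hs, rpowNegExp_of_pos hs, show m + 2 = m + 1 + 1 by ring]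
      simp only [neg_add', rpow_sub_one hs.ne']
      refine (hd.congr_of_eventuallyEq <| (eventually_gt_nhds hs).mono fun x hx =>
        rpowNegExp_of_pos hx).congr_deriv ?_
      rw [rpow_sub_one hs.ne']
      field_simp
  rcases eq_or_ne s 0 with rfl | hs
  · exact hasDerivAt_of_hasDerivAt_of_ne hne (continuous_rpowNegExp m hq).continuousAt
      ((((continuous_rpowNegExp _ hq).const_mul _).add
        ((continuous_rpowNegExp _ hq).const_mul _)).continuousAt)
  · exact hne s hs

theorem hasDerivAt_rpowNegExp_param (m s q : ℝ) :
    HasDerivAt (fun q => rpowNegExp m q s) (-rpowNegExp (m + 1) q s) q := by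
  rcases le_or_gt s 0 with hs | hs
  · simp only [rpowNegExp_of_nonpos hs, neg_zero]
    exact hasDerivAt_const q 0
  · simp only [rpowNegExp_of_pos hs]
    exact ((((hasDerivAt_id' q).div_const s).neg.exp).const_mul (s ^ (-m))).congr_deriv
      (by simp only [neg_add', rpow_sub_one hs.ne', Pi.neg_apply]; ring)

end rpowNegExp

theorem hasDerivAt_rpowNegExp_quadratic (a m s γ : ℝ) :
    HasDerivAt (fun y => rpowNegExp m (a * y ^ 2 / 4) s)
      (-(a * γ / 2) * rpowNegExp (m + 1) (a * γ ^ 2 / 4) s) γ := by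
  have hq : HasDerivAt (fun y : ℝ => a * y ^ 2 / 4) (a * γ / 2) γ :=
    (((hasDerivAt_pow 2 γ).const_mul a).div_const 4).congr_deriv (by ring)
  exact ((hasDerivAt_rpowNegExp_param m s _).comp γ hq).congr_deriv (by ring)

theorem pos_of_mem_ball_half {γ y : ℝ} (hγ : 0 < γ) (hy : y ∈ ball γ (γ / 2)) : 0 < y := by
  rw [Real.ball_eq_Ioo] at hy; linarith [hy.1]

theorem exists_bound_mul_rpowNegExp {a m γ : ℝ} {c : ℝ → ℝ} (hc : Continuous c) (hm : 0 < m)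
    (ha : 0 < a) (hγ : 0 < γ) :
    ∃ C, ∀ y ∈ ball γ (γ / 2), ∀ s, |c y * rpowNegExp m (a * y ^ 2 / 4) s| ≤ C := by
  obtain ⟨Cc, hCc⟩ :=
    (isCompact_closedBall γ (γ / 2)).exists_bound_of_continuousOn hc.continuousOn
  have hq₁ : 0 < a * (γ / 2) ^ 2 / 4 := by positivity
  refine ⟨Cc * (m / (a * (γ / 2) ^ 2 / 4)) ^ m, fun y hy s => ?_⟩
  have hγy : γ / 2 ≤ y := by rw [Real.ball_eq_Ioo] at hy; linarith [hy.1]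
  rw [abs_mul, abs_of_nonneg rpowNegExp_nonneg]
  exact mul_le_mul (hCc y (ball_subset_closedBall hy)) (rpowNegExp_le hm hq₁ (by gcongr) s)
    rpowNegExp_nonneg ((abs_nonneg _).trans (hCc y (ball_subset_closedBall hy)))

namespace boundaryHeatKernel

noncomputable def ext (a γ s : ℝ) : ℝ :=
  √a / (2 * √π) * γ * rpowNegExp (3 / 2) (a * γ ^ 2 / 4) s

noncomputable def timeDeriv (a γ s : ℝ) : ℝ :=
  √a / (2 * √π) * γ *
    (-(3 / 2) * rpowNegExp (5 / 2) (a * γ ^ 2 / 4) s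
      + a * γ ^ 2 / 4 * rpowNegExp (7 / 2) (a * γ ^ 2 / 4) s)

noncomputable def spaceDeriv (a γ s : ℝ) : ℝ :=
  √a / (2 * √π) *
    (rpowNegExp (3 / 2) (a * γ ^ 2 / 4) s - a * γ ^ 2 / 2 * rpowNegExp (5 / 2) (a * γ ^ 2 / 4) s)

variable {a γ s : ℝ}

theorem ext_eq_of_nonneg (a γ : ℝ) (hs : 0 ≤ s) : ext a γ s = boundaryHeatKernel a γ s := by
  rcases hs.eq_or_lt with rfl | hs
  · simp [ext, boundaryHeatKernel, rpowNegExp_of_nonpos le_rfl]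
  · rw [ext, boundaryHeatKernel, rpowNegExp_of_pos hs, rpow_neg hs.le]
    have : 0 < s ^ ((3 : ℝ) / 2) := by positivity
    field_simp

theorem ext_of_nonpos (a γ : ℝ) (hs : s ≤ 0) : ext a γ s = 0 := by
  simp [ext, rpowNegExp_of_nonpos hs]

theorem timeDeriv_of_nonpos (a γ : ℝ) (hs : s ≤ 0) : timeDeriv a γ s = 0 := by
  simp [timeDeriv, rpowNegExp_of_nonpos hs]

theorem continuous_ext (ha : 0 < a) (hγ : γ ≠ 0) : Continuous (ext a γ) :=
  continuous_const.mul (continuous_rpowNegExp _ (by positivity))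

theorem continuous_timeDeriv (ha : 0 < a) (hγ : γ ≠ 0) : Continuous (timeDeriv a γ) :=
  continuous_const.mul <| (continuous_const.mul (continuous_rpowNegExp _ (by positivity))).add
    (continuous_const.mul (continuous_rpowNegExp _ (by positivity)))

theorem continuous_spaceDeriv (ha : 0 < a) (hγ : γ ≠ 0) : Continuous (spaceDeriv a γ) :=
  continuous_const.mul <| (continuous_rpowNegExp _ (by positivity)).sub
    (continuous_const.mul (continuous_rpowNegExp _ (by positivity)))

theorem hasDerivAt_ext (ha : 0 < a) (hγ : γ ≠ 0) (s : ℝ) :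
    HasDerivAt (ext a γ) (timeDeriv a γ s) s := by
  have h := (hasDerivAt_rpowNegExp (3 / 2) (by positivity : 0 < a * γ ^ 2 / 4) s).const_mul
    (√a / (2 * √π) * γ)
  norm_num at h
  exact h.congr_deriv (by unfold timeDeriv; ring)

theorem hasDerivAt_ext_space (a s γ : ℝ) :
    HasDerivAt (fun y => ext a y s) (spaceDeriv a γ s) γ := by
  have h := ((hasDerivAt_id' γ).const_mul (√a / (2 * √π))).mul
    (hasDerivAt_rpowNegExp_quadratic a (3 / 2) s γ)
  norm_num at h
  exact h.congr_deriv (by unfold spaceDeriv; ring)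

theorem hasDerivAt_spaceDeriv (a s γ : ℝ) :
    HasDerivAt (fun y => spaceDeriv a y s) (a * timeDeriv a γ s) γ := by
  have h := ((hasDerivAt_rpowNegExp_quadratic a (3 / 2) s γ).sub
    ((((hasDerivAt_pow 2 γ).const_mul a).div_const 2).mul
      (hasDerivAt_rpowNegExp_quadratic a (5 / 2) s γ))).const_mul (√a / (2 * √π))
  norm_num at h
  exact h.congr_deriv (by unfold timeDeriv; ring)

theorem exists_bound_timeDeriv (ha : 0 < a) (hγ : 0 < γ) :
    ∃ C, ∀ y ∈ ball γ (γ / 2), ∀ s, |timeDeriv a y s| ≤ C := by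
  obtain ⟨C₁, h₁⟩ := exists_bound_mul_rpowNegExp
    (c := fun y => √a / (2 * √π) * y * (-(3 / 2))) (by fun_prop) (by norm_num : (0 : ℝ) < 5 / 2)
    ha hγ
  obtain ⟨C₂, h₂⟩ := exists_bound_mul_rpowNegExp
    (c := fun y => √a / (2 * √π) * y * (a * y ^ 2 / 4)) (by fun_prop)
    (by norm_num : (0 : ℝ) < 7 / 2) ha hγ
  refine ⟨C₁ + C₂, fun y hy s => ?_⟩
  have hsplit : timeDeriv a y s
      = √a / (2 * √π) * y * (-(3 / 2)) * rpowNegExp (5 / 2) (a * y ^ 2 / 4) s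
        + √a / (2 * √π) * y * (a * y ^ 2 / 4) * rpowNegExp (7 / 2) (a * y ^ 2 / 4) s := by
    unfold timeDeriv; ring
  rw [hsplit]
  exact (abs_add_le _ _).trans (add_le_add (h₁ y hy s) (h₂ y hy s))

theorem exists_bound_spaceDeriv (ha : 0 < a) (hγ : 0 < γ) :
    ∃ C, ∀ y ∈ ball γ (γ / 2), ∀ s, |spaceDeriv a y s| ≤ C := by
  obtain ⟨C₁, h₁⟩ := exists_bound_mul_rpowNegExp
    (c := fun _ => √a / (2 * √π)) (by fun_prop) (by norm_num : (0 : ℝ) < 3 / 2) ha hγ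
  obtain ⟨C₂, h₂⟩ := exists_bound_mul_rpowNegExp
    (c := fun y => √a / (2 * √π) * (a * y ^ 2 / 2)) (by fun_prop)
    (by norm_num : (0 : ℝ) < 5 / 2) ha hγ
  refine ⟨C₁ + C₂, fun y hy s => ?_⟩
  have hsplit : spaceDeriv a y s
      = √a / (2 * √π) * rpowNegExp (3 / 2) (a * y ^ 2 / 4) s
        - √a / (2 * √π) * (a * y ^ 2 / 2) * rpowNegExp (5 / 2) (a * y ^ 2 / 4) s := by
    unfold spaceDeriv; ring
  rw [hsplit]
  exact (abs_sub _ _).trans (add_le_add (h₁ y hy s) (h₂ y hy s))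

theorem integral_sub_mul_boundaryHeatKernel_eq_ext (g : ℝ → ℝ) (a γ : ℝ) {t : ℝ} (ht : 0 ≤ t) :
    ∫ s in 0..t, g (t - s) * boundaryHeatKernel a γ s = ∫ s in 0..t, g (t - s) * ext a γ s := by
  refine integral_congr fun s hs => ?_
  rw [uIcc_of_le ht] at hs
  simp only [ext_eq_of_nonneg a γ hs.1]

variable {φ : ℝ → ℝ} {t : ℝ}

theorem hasDerivAt_integral_mul_ext (ha : 0 < a) (hφ : ContinuousOn φ (uIcc 0 t)) (hγ : 0 < γ) :
    HasDerivAt (fun y => ∫ u in 0..t, φ u * ext a y u) (∫ u in 0..t, φ u * spaceDeriv a γ u) γ := by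
  obtain ⟨C, hC⟩ := exists_bound_spaceDeriv ha hγ
  exact hasDerivAt_intervalIntegral_mul (half_pos hγ) hφ
    (fun y hy => continuous_ext ha (pos_of_mem_ball_half hγ hy).ne')
    (continuous_spaceDeriv ha hγ.ne') hC (fun y _ u => hasDerivAt_ext_space a u y)

theorem hasDerivAt_integral_mul_spaceDeriv (ha : 0 < a) (hφ : ContinuousOn φ (uIcc 0 t))
    (hγ : 0 < γ) :
    HasDerivAt (fun y => ∫ u in 0..t, φ u * spaceDeriv a y u)
      (∫ u in 0..t, φ u * (a * timeDeriv a γ u)) γ := by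
  obtain ⟨C, hC⟩ := exists_bound_timeDeriv ha hγ
  refine hasDerivAt_intervalIntegral_mul (F := fun y u => spaceDeriv a y u) (C := a * C)
    (half_pos hγ) hφ (fun y hy => continuous_spaceDeriv ha (pos_of_mem_ball_half hγ hy).ne')
    ((continuous_timeDeriv ha hγ.ne').const_mul a) (fun y hy u => ?_)
    (fun y _ u => hasDerivAt_spaceDeriv a u y)
  rw [abs_mul, abs_of_pos ha]
  exact mul_le_mul_of_nonneg_left (hC y hy u) ha.le

theorem hasDerivAt_integral_sub_mul_ext {g : ℝ → ℝ} (ha : 0 < a) (hg : ContinuousOn g (Ici 0))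
    (hγ : 0 < γ) (ht : 0 < t) :
    HasDerivAt (fun τ => ∫ s in 0..τ, g (τ - s) * ext a γ s)
      (∫ s in 0..t, g (t - s) * timeDeriv a γ s) t := by
  obtain ⟨C, hC⟩ := exists_bound_timeDeriv ha hγ
  exact hasDerivAt_integral_sub_mul hg (hasDerivAt_ext ha hγ.ne') (continuous_timeDeriv ha hγ.ne')
    (hC γ (mem_ball_self (half_pos hγ))) (fun _ => ext_of_nonpos a γ)
    (fun _ => timeDeriv_of_nonpos a γ) ht

end boundaryHeatKernel

open boundaryHeatKernel

theorem boundary_kernel_convolution_heat_general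
    (a : ℝ) (ha : 0 < a)
    (g : ℝ → ℝ)
    (hgcont : ContinuousOn g (Set.Ici 0))
    (f : ℝ → ℝ → ℝ)
    (hf : ∀ γ t : ℝ, 0 < γ → 0 < t →
      f γ t = ∫ s in (0 : ℝ)..t, g (t - s) * boundaryHeatKernel a γ s) :
    ∀ γ t : ℝ, 0 < γ → 0 < t →
      deriv (fun t' => f γ t') t
        = 1 / a * deriv (fun γ' => deriv (fun γ'' => f γ'' t) γ') γ := by
  intro γ t hγ ht
  have hf_ext : ∀ y τ, 0 < y → 0 < τ → f y τ = ∫ s in 0..τ, g (τ - s) * ext a y s :=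
    fun y τ hy hτ => (hf y τ hy hτ).trans (integral_sub_mul_boundaryHeatKernel_eq_ext g a y hτ.le)
  have hg_t : ContinuousOn (fun u => g (t - u)) (uIcc 0 t) := by
    rw [uIcc_of_le ht.le]
    exact hgcont.comp (continuous_sub_left t).continuousOn fun u hu => sub_nonneg.2 hu.2
  have hspace : ∀ x > 0,
      deriv (fun y => f y t) x = ∫ u in 0..t, g (t - u) * spaceDeriv a x u := fun x hx => by
    rw [EventuallyEq.deriv_eq ((eventually_gt_nhds hx).mono fun y hy => hf_ext y t hy ht)]
    exact (hasDerivAt_integral_mul_ext ha hg_t hx).deriv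
  have hspace₂ : deriv (fun x => deriv (fun y => f y t) x) γ
      = ∫ u in 0..t, g (t - u) * (a * timeDeriv a γ u) := by
    rw [EventuallyEq.deriv_eq ((eventually_gt_nhds hγ).mono hspace)]
    exact (hasDerivAt_integral_mul_spaceDeriv ha hg_t hγ).deriv
  have htime : deriv (fun τ => f γ τ) t = ∫ u in 0..t, g (t - u) * timeDeriv a γ u := by
    rw [EventuallyEq.deriv_eq ((eventually_gt_nhds ht).mono fun τ hτ => hf_ext γ τ hγ hτ)]
    exact (hasDerivAt_integral_sub_mul_ext ha hgcont hγ ht).deriv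
  simp_rw [htime, hspace₂, mul_left_comm (g _) a, intervalIntegral.integral_const_mul]
  field_simp

/-- the time-convolution of a bounded continuous boundary forcing g
with the boundary heat kernel solves the heat equation on (0,∞)×(0,∞). -/
theorem boundary_kernel_convolution_heat
    (a : ℝ) (ha : 0 < a)
    (g : ℝ → ℝ)
    (hgcont : ContinuousOn g (Set.Ici 0))
    (hgbdd : ∃ C, ∀ s ≥ (0 : ℝ), |g s| ≤ C)
    (f : ℝ → ℝ → ℝ)
    (hf : ∀ γ t : ℝ, 0 < γ → 0 < t →
      f γ t = ∫ s in (0 : ℝ)..t, g (t - s) * boundaryHeatKernel a γ s) :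
    ∀ γ t : ℝ, 0 < γ → 0 < t →
      deriv (fun t' => f γ t') t
        = 1 / a * deriv (fun γ' => deriv (fun γ'' => f γ'' t) γ') γ :=
  boundary_kernel_convolution_heat_general a ha g hgcont f hf
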